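/- For all T > 0 and s, t ∈ [0, T], the series ∑_{j=1}^∞ (2T / (π² j²)) · sin(π j s/T) · sin(π j t/T) converges with sum min(s, t) − st/T. -/

import Mathlib

/-!
Writing `2 sin a sin b = cos (a - b) - cos (a + b)`, the series splits into two copies of
`∑ cos (2π n x) / n² = π² B₂(x)` with `B₂(x) = x² - x + 1/6` the second Bernoulli polynomial, taken
at `x = |t - s| / (2T)` and `x = (s + t) / (2T)`, both in `[0, 1]`. The difference of the two
Bernoulli values is a quadratic in `s, t` that collapses to `min s t - s t / T`, because
`s + t - |t - s| = 2 min s t`.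
-/

open Filter Topology Real

theorem hasSum_one_div_nat_sq_mul_cos {x : ℝ} (hx : x ∈ Set.Icc (0 : ℝ) 1) :
    HasSum (fun n : ℕ => 1 / (n : ℝ) ^ 2 * cos (2 * π * n * x)) (π ^ 2 * (x ^ 2 - x + 6⁻¹)) := by
  have h := hasSum_one_div_nat_pow_mul_cos (k := 1) one_ne_zero hx
  rw [← bernoulliFun, bernoulliFun_two] at h
  convert h using 2
  norm_num [Nat.factorial]
  ring

theorem HasSum.tendsto_sum_Icc_one {M : Type*} [AddCommMonoid M] [TopologicalSpace M]
    {f : ℕ → M} {a : M} (h : HasSum f a) (h0 : f 0 = 0) :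
    Tendsto (fun n => ∑ j ∈ Finset.Icc 1 n, f j) atTop (𝓝 a) := by
  have hsum (n : ℕ) : ∑ j ∈ Finset.range (n + 1), f j = ∑ j ∈ Finset.Icc 1 n, f j := by
    rw [Nat.range_succ_eq_Icc_zero, ← Finset.add_sum_Ioc_eq_sum_Icc n.zero_le, h0,
      AddMonoid.zero_add]
    rfl
  exact (h.tendsto_sum_nat.comp (tendsto_add_atTop_nat 1)).congr hsum

theorem hasSum_brownianBridge_covariance {T : ℝ} (hT : 0 < T) {s t : ℝ}
    (hs : s ∈ Set.Icc 0 T) (ht : t ∈ Set.Icc 0 T) :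
    HasSum (fun j : ℕ => 2 * T / (π ^ 2 * (j : ℝ) ^ 2) *
        (sin (π * j * s / T) * sin (π * j * t / T)))
      (min s t - s * t / T) := by
  obtain ⟨hs0, hsT⟩ := hs
  obtain ⟨ht0, htT⟩ := ht
  have hdiff : |t - s| / (2 * T) ∈ Set.Icc (0 : ℝ) 1 :=
    ⟨by positivity, (div_le_one (by positivity)).2 (by rw [abs_le]; constructor <;> linarith)⟩
  have hsum : (s + t) / (2 * T) ∈ Set.Icc (0 : ℝ) 1 :=
    ⟨by positivity, (div_le_one (by positivity)).2 (by linarith)⟩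
  have hmin : 2 * min s t = s + t - |t - s| := by
    linarith [min_add_max s t, max_sub_min_eq_abs s t]
  have hvalue : T / π ^ 2 * (π ^ 2 * ((|t - s| / (2 * T)) ^ 2 - |t - s| / (2 * T) + 6⁻¹)
      - π ^ 2 * (((s + t) / (2 * T)) ^ 2 - (s + t) / (2 * T) + 6⁻¹)) = min s t - s * t / T := by
    rw [div_pow, sq_abs]
    field_simp
    linear_combination (-12 * T) * hmin
  rw [← hvalue]
  refine (((hasSum_one_div_nat_sq_mul_cos hdiff).sub
    (hasSum_one_div_nat_sq_mul_cos hsum)).mul_left (T / π ^ 2)).congr_fun fun j => ?_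
  have hcos_diff : cos (2 * π * j * (|t - s| / (2 * T))) = cos (π * j * s / T - π * j * t / T) := by
    rw [← cos_abs (π * j * s / T - _), ← sub_div, ← mul_sub, abs_div, abs_mul, abs_of_pos hT,
      abs_of_nonneg (by positivity : 0 ≤ π * j), abs_sub_comm]
    field_simp
  have hcos_sum : cos (2 * π * j * ((s + t) / (2 * T))) = cos (π * j * s / T + π * j * t / T) := by
    congr 1
    field_simp
  rw [hcos_diff, hcos_sum, ← mul_sub, ← two_mul_sin_mul_sin]
  ring

theorem stmt15 (T : ℝ) (hT : 0 < T) (s t : ℝ) (hs : s ∈ Set.Icc 0 T) (ht : t ∈ Set.Icc 0 T) :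
    Tendsto
      (fun n : ℕ => ∑ j ∈ Finset.Icc 1 n,
        (2 * T / (π ^ 2 * (j : ℝ) ^ 2)) *
          (Real.sin (π * (j : ℝ) * s / T) * Real.sin (π * (j : ℝ) * t / T)))
      atTop (𝓝 (min s t - s * t / T)) :=
  (hasSum_brownianBridge_covariance hT hs ht).tendsto_sum_Icc_one (by simp)
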